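/- Suppose V, I : [0,∞) → ℝ are continuous, V ≥ 0, I is nondecreasing with I(0) = 0, V(t) = f(t) + I(t) for a continuous f with f(0) ≥ 0, and ∫_0^∞ V(t) dI(t) = 0. Then I(t) = sup_{0≤s≤t} max(−f(s), 0) for all t ≥ 0; in particular the pair (V, I) solving the Skorohod problem for f is unique. -/
import Mathlib


/-- Uniqueness for the one-dimensional Skorohod reflection problem: any regulator
`I` that is nondecreasing, starts at zero, keeps `V = f + I` nonnegative, and
increases only where `V = 0` must equal the running supremum of the negative part
of `f`. -/
theorem skorohod_problem_uniqueness (f V I : ℝ → ℝ)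
    (hfc : ContinuousOn f (Set.Ici 0)) (hVc : ContinuousOn V (Set.Ici 0))
    (hIc : ContinuousOn I (Set.Ici 0))
    (hVnonneg : ∀ t, 0 ≤ t → 0 ≤ V t)
    (hImono : ∀ s t, 0 ≤ s → s ≤ t → I s ≤ I t) (hI0 : I 0 = 0)
    (hV : ∀ t, V t = f t + I t) (hf0 : 0 ≤ f 0)
    (hcompl : ∀ t, 0 ≤ t → 0 < V t →
      ∃ ε > 0, ∀ s, 0 ≤ s → s ∈ Set.Icc (t - ε) (t + ε) → I s = I t) :
    ∀ t, 0 ≤ t → I t = sSup ((fun s => max (-f s) 0) '' Set.Icc 0 t) := by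
  intro t ht
  set g : ℝ → ℝ := fun s => max (-f s) 0 with hg
  have hMem0 : (0:ℝ) ∈ Set.Icc 0 t := ⟨le_refl 0, ht⟩
  have hI0t : 0 ≤ I t := by have := hImono 0 t le_rfl ht; rw [hI0] at this; exact this
  have hub : ∀ x ∈ g '' Set.Icc 0 t, x ≤ I t := by
    rintro x ⟨s, hs, rfl⟩
    have hIst : I s ≤ I t := hImono s t hs.1 hs.2
    have hVs := hVnonneg s hs.1
    have hfs : -f s ≤ I s := by have := hV s; linarith
    exact max_le (hfs.trans hIst) hI0t
  have hbdd : BddAbove (g '' Set.Icc 0 t) := ⟨I t, hub⟩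
  set M := sSup (g '' Set.Icc 0 t) with hM
  have hMle : M ≤ I t := Real.sSup_le hub hI0t
  have hMge : ∀ s ∈ Set.Icc 0 t, g s ≤ M := fun s hs => le_csSup hbdd ⟨s, hs, rfl⟩
  have hM0 : 0 ≤ M := le_trans (le_max_right _ _) (hMge 0 hMem0)
  rcases eq_or_lt_of_le hMle with h | h
  · exact h.symm
  · exfalso
    -- S : points of [0,t] where I ≤ M
    set S : Set ℝ := Set.Icc 0 t ∩ I ⁻¹' Set.Iic M with hS
    have hSne : S.Nonempty := ⟨0, hMem0, by simp [hI0, hM0]⟩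
    have hSbdd : BddAbove S := ⟨t, fun x hx => hx.1.2⟩
    have hSclosed : IsClosed S :=
      (hIc.mono (fun x hx => hx.1)).preimage_isClosed_of_isClosed isClosed_Icc
        isClosed_Iic
    set u := sSup S with hu
    have huS : u ∈ S := hSclosed.csSup_mem hSne hSbdd
    have hu0 : 0 ≤ u := huS.1.1
    have hut : u ≤ t := huS.1.2
    have hIuM : I u ≤ M := huS.2
    have hult : u < t := by
      rcases lt_or_eq_of_le hut with h' | h'
      · exact h'
      · exfalso; rw [h'] at hIuM; linarith
    -- for s ∈ (u, t], V s > 0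
    have hVpos : ∀ s, u < s → s ≤ t → 0 < V s := by
      intro s hus hst
      have hs0 : 0 ≤ s := le_trans hu0 hus.le
      have hnotS : s ∉ S := fun hmem => absurd (le_csSup hSbdd hmem) (not_le.mpr hus)
      have hIsM : M < I s := by
        by_contra hle
        exact hnotS ⟨⟨hs0, hst⟩, not_lt.mp hle⟩
      have : -f s ≤ M := le_trans (le_max_left _ _) (hMge s ⟨hs0, hst⟩)
      have := hV s; linarith
    -- T : points of [u,t] where I = I t
    set T : Set ℝ := Set.Icc u t ∩ I ⁻¹' {I t} with hT
    have hTne : T.Nonempty := ⟨t, ⟨hut, le_rfl⟩, rfl⟩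
    have hTbdd : BddBelow T := ⟨u, fun x hx => hx.1.1⟩
    have hTclosed : IsClosed T :=
      ((hIc.mono (fun x hx => le_trans hu0 hx.1)).preimage_isClosed_of_isClosed
        isClosed_Icc isClosed_singleton)
    set w := sInf T with hw
    have hwT : w ∈ T := hTclosed.csInf_mem hTne hTbdd
    have hwu : u ≤ w := hwT.1.1
    have hwt : w ≤ t := hwT.1.2
    have hIw : I w = I t := hwT.2
    have hweq : w = u := by
      by_contra hne
      have huw : u < w := lt_of_le_of_ne hwu (Ne.symm hne)
      have hw0 : 0 ≤ w := le_trans hu0 hwu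
      obtain ⟨ε, hε, hconst⟩ := hcompl w hw0 (hVpos w huw hwt)
      set s0 := max (w - ε) ((u + w) / 2) with hs0def
      have hs0lt : s0 < w := max_lt (by linarith) (by linarith)
      have hs0gt : u < s0 := lt_of_lt_of_le (by linarith) (le_max_right _ _)
      have hs00 : 0 ≤ s0 := le_trans hu0 hs0gt.le
      have hIs0 : I s0 = I w :=
        hconst s0 hs00 ⟨le_max_left _ _, by linarith⟩
      have hs0T : s0 ∈ T := ⟨⟨hs0gt.le, le_trans hs0lt.le hwt⟩, by
        simp only [Set.mem_preimage, Set.mem_singleton_iff]; rw [hIs0, hIw]⟩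
      have := csInf_le hTbdd hs0T
      linarith
    rw [hweq] at hIw
    linarith
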